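/- arXiv:1701.03884 — 6 statements merged into one kernel-verified Lean document; each statement's English description precedes it below -/
import Mathlib

section
/- Let p be a positive integer and let r_p ∈ (0,1) be the maximal root in (0,1) of 8 r^{2p} + r^{2(p-1)} − 6 r^{p-1} + 1 = 0. Set a = (1 − √(1 − r_p^{2p})/√2)/r_p^p and define f(z) = z (z^p − a)/(1 − a z^p) for z ∈ 𝔻. Then f is analytic in 𝔻 with |f(z)| ≤ 1 for all z ∈ 𝔻, f is p-symmetric with Taylor coefficients a_{pk+1}, and ∑_{k≥0} |a_{pk+1}| r_p^{pk+1} = 1; that is, f is extremal for the Bohr radius r_p of the class of p-symmetric self-maps of 𝔻. -/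
/-!
Put `s = r_p^{p-1}` and `t = r_p^p = r_p s`. The defining equation reads `8t² + (3 - s)² = 8`,
so `√(1 - t²)/√2 = (3 - s)/4` and `a = (1 + s)/(4t)`. The function is `z` times the disk
automorphism `w ↦ (w - a)/(1 - a w)` at `w = z^p`, whose Taylor coefficients are `-a` and
`(1 - a²) aᵏ`; its majorant series sums in closed form to `r_p (a + (1 - a²) t/(1 - a t))`,
which the equation turns into `1`. The bound `a < 1` amounts to `s > 1/3`, and this is where the
maximality of `r_p` enters: the polynomial is negative where `r^{p-1} = 1/3` and positive at `1`,
so it has a root beyond that point.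
-/

open Complex ComplexConjugate Set Metric

def blaschkeCoeff {R : Type*} [Ring R] (a : R) : ℕ → R
  | 0 => -a
  | k + 1 => (1 - a ^ 2) * a ^ k

theorem map_blaschkeCoeff {R S : Type*} [Ring R] [Ring S] (φ : R →+* S) (a : R) (k : ℕ) :
    φ (blaschkeCoeff a k) = blaschkeCoeff (φ a) k := by
  cases k <;> simp [blaschkeCoeff]

theorem hasSum_blaschkeCoeff_mul_pow {K : Type*} [NormedField K] {a w : K} (h : ‖a * w‖ < 1) :
    HasSum (fun k ↦ blaschkeCoeff a k * w ^ k) ((w - a) / (1 - a * w)) := by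
  have hne : 1 - a * w ≠ 0 := sub_ne_zero.mpr fun h1 ↦ by simp [← h1] at h
  rw [← hasSum_nat_add_iff' 1, Finset.sum_range_one,
    show (w - a) / (1 - a * w) - blaschkeCoeff a 0 * w ^ 0 = (1 - a ^ 2) * w * (1 - a * w)⁻¹ by
      rw [eq_mul_inv_iff_mul_eq₀ hne, sub_mul, div_mul_cancel₀ _ hne]
      simp only [blaschkeCoeff]
      ring]
  refine ((hasSum_geometric_of_norm_lt_one h).mul_left _).congr_fun fun k ↦ ?_
  simp only [blaschkeCoeff]
  ring

theorem hasSum_abs_blaschkeCoeff_mul_pow {a t : ℝ} (ha₀ : 0 ≤ a) (ha₁ : a ≤ 1) (ht : 0 ≤ t)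
    (hat : a * t < 1) :
    HasSum (fun k ↦ |blaschkeCoeff a k| * t ^ k) (a + (1 - a ^ 2) * t / (1 - a * t)) := by
  rw [← hasSum_nat_add_iff' 1, Finset.sum_range_one,
    show a + (1 - a ^ 2) * t / (1 - a * t) - |blaschkeCoeff a 0| * t ^ 0
      = (1 - a ^ 2) * t * (1 - a * t)⁻¹ by simp [blaschkeCoeff, abs_of_nonneg ha₀, div_eq_mul_inv]]
  refine ((hasSum_geometric_of_lt_one (by positivity) hat).mul_left _).congr_fun fun k ↦ ?_
  have h1a : 0 ≤ 1 - a ^ 2 := by nlinarith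
  simp only [blaschkeCoeff, abs_of_nonneg (mul_nonneg h1a (pow_nonneg ha₀ k))]
  ring

theorem normSq_one_sub_conj_mul_sub_normSq_sub (a w : ℂ) :
    normSq (1 - conj a * w) - normSq (w - a) = (1 - normSq a) * (1 - normSq w) := by
  simp only [normSq_apply, sub_re, sub_im, mul_re, mul_im, conj_re, conj_im, one_re, one_im]
  ring

theorem norm_sub_le_norm_one_sub_conj_mul {a w : ℂ} (ha : ‖a‖ ≤ 1) (hw : ‖w‖ ≤ 1) :
    ‖w - a‖ ≤ ‖1 - conj a * w‖ := by
  have key := normSq_one_sub_conj_mul_sub_normSq_sub a w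
  rw [← sq_le_sq₀ (norm_nonneg _) (norm_nonneg _), ← normSq_eq_norm_sq, ← normSq_eq_norm_sq]
  rw [normSq_eq_norm_sq a, normSq_eq_norm_sq w] at key
  nlinarith [mul_nonneg (sub_nonneg.2 (pow_le_one₀ (n := 2) (norm_nonneg a) ha))
    (sub_nonneg.2 (pow_le_one₀ (n := 2) (norm_nonneg w) hw))]

noncomputable def pSymmBlaschke (p : ℕ) (a z : ℂ) : ℂ := z * (z ^ p - a) / (1 - a * z ^ p)

theorem norm_mul_pow_lt_one {a z : ℂ} (ha : ‖a‖ < 1) (hz : ‖z‖ ≤ 1) (p : ℕ) :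
    ‖a * z ^ p‖ < 1 := by
  rw [norm_mul, norm_pow]
  exact mul_lt_one_of_nonneg_of_lt_one_left (norm_nonneg a) ha (pow_le_one₀ (norm_nonneg z) hz)

theorem analyticOnNhd_pSymmBlaschke (p : ℕ) {a : ℂ} (ha : ‖a‖ < 1) :
    AnalyticOnNhd ℂ (pSymmBlaschke p a) (ball 0 1) := fun z hz ↦ by
  have hne : 1 - a * z ^ p ≠ 0 := sub_ne_zero.mpr fun h ↦ by
    simpa [← h] using norm_mul_pow_lt_one ha (mem_ball_zero_iff.1 hz).le p
  unfold pSymmBlaschke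
  fun_prop (disch := exact hne)

theorem hasSum_pSymmBlaschke (p : ℕ) {a z : ℂ} (ha : ‖a‖ < 1) (hz : ‖z‖ ≤ 1) :
    HasSum (fun k ↦ blaschkeCoeff a k * z ^ (p * k + 1)) (pSymmBlaschke p a z) := by
  rw [pSymmBlaschke, mul_div_assoc]
  refine ((hasSum_blaschkeCoeff_mul_pow (norm_mul_pow_lt_one ha hz p)).mul_left z).congr_fun
    fun k ↦ ?_
  ring

theorem norm_pSymmBlaschke_ofReal_le_one (p : ℕ) {a : ℝ} (ha : |a| ≤ 1) {z : ℂ} (hz : ‖z‖ ≤ 1) :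
    ‖pSymmBlaschke p a z‖ ≤ 1 := by
  have hzp : ‖z ^ p‖ ≤ 1 := by rw [norm_pow]; exact pow_le_one₀ (norm_nonneg z) hz
  have key := norm_sub_le_norm_one_sub_conj_mul (by rwa [norm_real, Real.norm_eq_abs]) hzp
  rw [conj_ofReal] at key
  rw [pSymmBlaschke, norm_div, norm_mul]
  exact div_le_one_of_le₀ ((mul_le_of_le_one_left (norm_nonneg _) hz).trans key) (norm_nonneg _)

def pSymmBohrPoly (p : ℕ) (r : ℝ) : ℝ :=
  8 * r ^ (2 * p) + r ^ (2 * (p - 1)) - 6 * r ^ (p - 1) + 1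

theorem pSymmBohrPoly_eq {p : ℕ} (hp : 0 < p) (r : ℝ) :
    pSymmBohrPoly p r = 8 * (r * r ^ (p - 1)) ^ 2 + (r ^ (p - 1)) ^ 2 - 6 * r ^ (p - 1) + 1 := by
  rw [pSymmBohrPoly, ← pow_succ', Nat.sub_add_cancel hp, pow_mul', pow_mul']

theorem exists_pSymmBohrPoly_eq_zero_of_pow_gt {p : ℕ} (hp : 2 ≤ p) :
    ∃ r ∈ Ioo (0 : ℝ) 1, 1 / 3 < r ^ (p - 1) ∧ pSymmBohrPoly p r = 0 := by
  have hp₁ : p - 1 ≠ 0 := by omega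
  set r₀ : ℝ := (1 / 3) ^ (((p - 1 : ℕ) : ℝ)⁻¹)
  have hr₀ : r₀ ^ (p - 1) = 1 / 3 := Real.rpow_inv_natCast_pow (by norm_num) hp₁
  have hr₀_pos : 0 < r₀ := by positivity
  have hr₀_lt : r₀ < 1 := Real.rpow_lt_one (by norm_num) (by norm_num) (by positivity)
  have hneg : pSymmBohrPoly p r₀ < 0 := by
    rw [pSymmBohrPoly, show 2 * p = 2 * (p - 1) + 2 by omega, pow_add, pow_mul', hr₀]
    nlinarith
  obtain ⟨r, hr, hr0⟩ := intermediate_value_Ioo hr₀_lt.le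
    (by unfold pSymmBohrPoly; fun_prop : Continuous (pSymmBohrPoly p)).continuousOn
    ⟨hneg, by norm_num [pSymmBohrPoly]⟩
  exact ⟨r, ⟨hr₀_pos.trans hr.1, hr.2⟩, hr₀ ▸ pow_lt_pow_left₀ hr.1 hr₀_pos.le hp₁, hr0⟩

theorem one_third_lt_pow_pred {p : ℕ} (hp : 0 < p) {rp : ℝ}
    (hmax : ∀ s ∈ Ioo (0 : ℝ) 1, pSymmBohrPoly p s = 0 → s ≤ rp) :
    1 / 3 < rp ^ (p - 1) := by
  obtain rfl | hp₂ : p = 1 ∨ 2 ≤ p := by omega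
  · norm_num
  obtain ⟨r, hr, hr₃, hr0⟩ := exists_pSymmBohrPoly_eq_zero_of_pow_gt hp₂
  exact hr₃.trans_le (pow_le_pow_left₀ hr.1.le (hmax r hr hr0) _)

theorem sqrt_one_sub_sq_div_sqrt_two {s t : ℝ} (h : 8 * t ^ 2 + s ^ 2 - 6 * s + 1 = 0)
    (hs : s ≤ 3) : √(1 - t ^ 2) / √2 = (3 - s) / 4 := by
  rw [← Real.sqrt_div' _ zero_le_two,
    show (1 - t ^ 2) / 2 = ((3 - s) / 4) ^ 2 by linear_combination -h / 16,
    Real.sqrt_sq (by linarith)]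

theorem one_add_div_four_mul_lt_one {s t : ℝ} (h : 8 * t ^ 2 + s ^ 2 - 6 * s + 1 = 0) (ht : 0 < t)
    (hs₀ : 1 / 3 < s) (hs₁ : s < 3) : (1 + s) / (4 * t) < 1 := by
  rw [div_lt_one (by positivity)]
  nlinarith [mul_pos (sub_pos.2 hs₀) (sub_pos.2 hs₁)]

theorem pSymmBohr_majorant_eq_one {a r s : ℝ} (hr : 0 < r) (hs₀ : 0 < s) (hs₃ : s < 3)
    (h : 8 * (r * s) ^ 2 + s ^ 2 - 6 * s + 1 = 0) (ha : a = (1 + s) / (4 * (r * s))) :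
    r * (a + (1 - a ^ 2) * (r * s) / (1 - a * (r * s))) = 1 := by
  have hat : 1 - a * (r * s) = (3 - s) / 4 := by
    rw [ha]
    field_simp
    ring
  have : 3 - s ≠ 0 := by linarith
  rw [hat, ha]
  field_simp
  linear_combination 2 * h

/-- The function `f(z) = z (z^p - a)/(1 - a z^p)` with
`a = (1 - √(1 - r_p^{2p})/√2)/r_p^p` is an extremal function for the Bohr radius `r_p`
of the class of `p`-symmetric self-maps of the unit disk: it is analytic in 𝔻, bounded
by `1` there, `p`-symmetric, and its majorant series at `r = r_p` equals `1`. -/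
theorem extremal_p_symmetric (p : ℕ) (hp : 0 < p)
    (rp : ℝ) (hrp : rp ∈ Set.Ioo (0 : ℝ) 1)
    (hroot : 8 * rp ^ (2 * p) + rp ^ (2 * (p - 1)) - 6 * rp ^ (p - 1) + 1 = 0)
    (hmax : ∀ s ∈ Set.Ioo (0 : ℝ) 1,
      8 * s ^ (2 * p) + s ^ (2 * (p - 1)) - 6 * s ^ (p - 1) + 1 = 0 → s ≤ rp)
    (a : ℝ) (ha : a = (1 - Real.sqrt (1 - rp ^ (2 * p)) / Real.sqrt 2) / rp ^ p)
    (f : ℂ → ℂ) (hf : ∀ z : ℂ, f z = z * (z ^ p - (a : ℂ)) / (1 - (a : ℂ) * z ^ p)) :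
    AnalyticOn ℂ f (Metric.ball (0 : ℂ) 1) ∧
    (∀ z ∈ Metric.ball (0 : ℂ) 1, ‖f z‖ ≤ 1) ∧
    ∃ c : ℕ → ℂ,
      (∀ z ∈ Metric.ball (0 : ℂ) 1, HasSum (fun k : ℕ => c k * z ^ (p * k + 1)) (f z)) ∧
      ∑' k : ℕ, ‖c k‖ * rp ^ (p * k + 1) = 1 := by
  obtain ⟨hrp₀, hrp₁⟩ := hrp
  set s := rp ^ (p - 1) with hs
  have hpoly : 8 * (rp * s) ^ 2 + s ^ 2 - 6 * s + 1 = 0 := (pSymmBohrPoly_eq hp rp).symm.trans hroot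
  have hs₀ : 1 / 3 < s := one_third_lt_pow_pred hp hmax
  have hs₁ : s ≤ 1 := pow_le_one₀ hrp₀.le hrp₁.le
  have ht : rp ^ p = rp * s := by rw [hs, ← pow_succ', Nat.sub_add_cancel hp]
  have ha' : a = (1 + s) / (4 * (rp * s)) := by
    rw [ha, pow_mul', ht, sqrt_one_sub_sq_div_sqrt_two hpoly (by linarith)]
    ring
  have ha₀ : 0 < a := by rw [ha']; positivity
  have ha₁ : a < 1 := ha' ▸ one_add_div_four_mul_lt_one hpoly (by positivity) hs₀ (by linarith)
  have haC : ‖(a : ℂ)‖ < 1 := by rwa [norm_real, Real.norm_of_nonneg ha₀.le]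
  obtain rfl : f = pSymmBlaschke p a := funext hf
  refine ⟨(analyticOnNhd_pSymmBlaschke p haC).analyticOn,
    fun z hz ↦ norm_pSymmBlaschke_ofReal_le_one p (abs_le.2 ⟨by linarith, ha₁.le⟩)
      (mem_ball_zero_iff.1 hz).le,
    blaschkeCoeff (a : ℂ),
    fun z hz ↦ hasSum_pSymmBlaschke p haC (mem_ball_zero_iff.1 hz).le, ?_⟩
  have hmajorant := (hasSum_abs_blaschkeCoeff_mul_pow ha₀.le ha₁.le (pow_nonneg hrp₀.le p)
    (mul_lt_one_of_nonneg_of_lt_one_left ha₀.le ha₁ (pow_le_one₀ hrp₀.le hrp₁.le))).mul_left rp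
  rw [← pSymmBohr_majorant_eq_one hrp₀ (by positivity) (by linarith) hpoly ha', ← ht]
  refine (hmajorant.congr_fun fun k ↦ ?_).tsum_eq
  rw [← ofRealHom_eq_coe, ← map_blaschkeCoeff, ofRealHom_eq_coe, norm_real, Real.norm_eq_abs,
    pow_succ, pow_mul]
  ring
end

section
/- Let p be a positive integer and let r_p be the maximal positive root of the equation 8 r^{2p} + r^{2(p−1)} − 6 r^{p−1} + 1 = 0 in (0,1). Then 2 r_p^{p+1} ≤ 1. -/
/-- If `r_p` is the maximal root in `(0,1)` of `8 r^{2p} + r^{2(p-1)} - 6 r^{p-1} + 1 = 0`,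
then `2 r_p^{p+1} ≤ 1`. -/
theorem two_rp_pow_le_one (p : ℕ) (hp : 0 < p)
    (rp : ℝ) (hrp : rp ∈ Set.Ioo (0 : ℝ) 1)
    (hroot : 8 * rp ^ (2 * p) + rp ^ (2 * (p - 1)) - 6 * rp ^ (p - 1) + 1 = 0)
    (hmax : ∀ s ∈ Set.Ioo (0 : ℝ) 1,
      8 * s ^ (2 * p) + s ^ (2 * (p - 1)) - 6 * s ^ (p - 1) + 1 = 0 → s ≤ rp) :
    2 * rp ^ (p + 1) ≤ 1 := by
  obtain ⟨q, rfl⟩ : ∃ q, p = q + 1 := ⟨p - 1, by omega⟩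
  obtain ⟨h0, h1⟩ := hrp
  simp only [Nat.add_sub_cancel] at hroot
  have hx : 0 < rp ^ q := pow_pos h0 q
  have e1 : rp ^ (2 * (q + 1)) = rp ^ 2 * (rp ^ q) ^ 2 := by
    rw [show 2 * (q + 1) = 2 + q * 2 by ring, pow_add, pow_mul]
  have e2 : rp ^ (2 * q) = (rp ^ q) ^ 2 := by rw [mul_comm, pow_mul]
  have e3 : rp ^ (q + 1 + 1) = rp ^ q * rp ^ 2 := by rw [← pow_add]
  rw [e1, e2] at hroot
  rw [e3]
  nlinarith [sq_nonneg (rp ^ q - 1), hx, sq_nonneg rp, mul_pos hx hx]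
end

section
/- Let α ∈ [1/3, 1) and define ψ(x) = x + α (1 − x^2)/(1 − α x) for x ∈ [0, 1]. Then the maximum of ψ over [0, 1] is attained at x₁ = (1 − √(1 − α²)/√2)/α, and for all x ∈ [0, 1] one has ψ(x) ≤ (3 − 2√2 · √(1 − α²))/α. -/
/-!
Writing `t = 1 - αx` and `s = √(1 - α²)`, one has `α ψ(x) = 3 - 2√2 s - (√2 t - s)² / t`,
so on `[0, 1]` (where `t > 0`) `ψ` is maximal exactly where `t = s / √2`, i.e. at `x₁`.
The hypothesis `α ≥ 1/3` is what puts `x₁` inside `[0, 1]`: it is equivalent to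
`√2 (1 - α) ≤ √(1 - α²)`.
-/

open Real Set

noncomputable section

def psi (α x : ℝ) : ℝ := x + α * (1 - x ^ 2) / (1 - α * x)

def psiArgmax (α : ℝ) : ℝ := (1 - √(1 - α ^ 2) / √2) / α

lemma sqrt_two_mul_one_sub_le_sqrt_one_sub_sq {α : ℝ} (hα : 1 / 3 ≤ α) (hα1 : α ≤ 1) :
    √2 * (1 - α) ≤ √(1 - α ^ 2) := by
  rw [le_sqrt (mul_nonneg (sqrt_nonneg 2) (by linarith)) (by nlinarith), mul_pow, sq_sqrt zero_le_two]
  nlinarith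

lemma psi_eq_sub_sq_div {α s x : ℝ} (hα : α ≠ 0) (hx : 1 - α * x ≠ 0)
    (hs : s ^ 2 = 1 - α ^ 2) :
    psi α x = (3 - 2 * √2 * s) / α - (√2 * (1 - α * x) - s) ^ 2 / (α * (1 - α * x)) := by
  unfold psi
  rw [mul_comm α x] at hx ⊢
  field_simp
  linear_combination (1 - x * α) ^ 2 * sq_sqrt (zero_le_two : (0 : ℝ) ≤ 2) + hs

lemma psi_le {α x : ℝ} (hα : 0 < α) (hα1 : α ≤ 1) (hx : α * x < 1) :
    psi α x ≤ (3 - 2 * √2 * √(1 - α ^ 2)) / α := by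
  rw [psi_eq_sub_sq_div hα.ne' (by linarith) (sq_sqrt (by nlinarith))]
  have : 0 ≤ (√2 * (1 - α * x) - √(1 - α ^ 2)) ^ 2 / (α * (1 - α * x)) := by
    apply div_nonneg (sq_nonneg _)
    nlinarith
  linarith

lemma one_sub_mul_psiArgmax {α : ℝ} (hα : α ≠ 0) :
    1 - α * psiArgmax α = √(1 - α ^ 2) / √2 := by
  unfold psiArgmax
  field_simp
  ring

lemma psiArgmax_mem_Icc {α : ℝ} (hα : 1 / 3 ≤ α) (hα1 : α ≤ 1) : psiArgmax α ∈ Icc 0 1 := by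
  have hα0 : 0 < α := by linarith
  have hs : √(1 - α ^ 2) ≤ √2 := sqrt_le_sqrt (by nlinarith)
  have hkey := sqrt_two_mul_one_sub_le_sqrt_one_sub_sq hα hα1
  have h2 : 0 < √2 := by positivity
  unfold psiArgmax
  constructor
  · apply div_nonneg _ hα0.le
    rw [sub_nonneg, div_le_one h2]
    exact hs
  · rw [div_le_one hα0, sub_le_comm, le_div_iff₀ h2]
    linarith

lemma psi_psiArgmax {α : ℝ} (hα : 0 < α) (hα1 : α < 1) :
    psi α (psiArgmax α) = (3 - 2 * √2 * √(1 - α ^ 2)) / α := by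
  have ht := one_sub_mul_psiArgmax hα.ne'
  have ht0 : √(1 - α ^ 2) / √2 ≠ 0 := by
    have : 0 < 1 - α ^ 2 := by nlinarith
    positivity
  rw [psi_eq_sub_sq_div hα.ne' (ht ▸ ht0) (sq_sqrt (by nlinarith)), ht,
    mul_div_cancel₀ _ (by positivity), sub_self]
  simp

end

/-- For `1/3 ≤ α < 1`, the function `ψ(x) = x + α(1-x²)/(1-αx)` on `[0,1]` attains its
maximum at `x₁ = (1 - √(1-α²)/√2)/α`, and `ψ(x) ≤ (3 - 2√2 √(1-α²))/α` on `[0,1]`. -/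
theorem psi_max (α : ℝ) (hα : 1 / 3 ≤ α) (hα1 : α < 1)
    (ψ : ℝ → ℝ) (hψ : ∀ x : ℝ, ψ x = x + α * (1 - x ^ 2) / (1 - α * x))
    (x₁ : ℝ) (hx₁ : x₁ = (1 - Real.sqrt (1 - α ^ 2) / Real.sqrt 2) / α) :
    x₁ ∈ Set.Icc (0 : ℝ) 1 ∧
    (∀ x ∈ Set.Icc (0 : ℝ) 1, ψ x ≤ ψ x₁) ∧
    (∀ x ∈ Set.Icc (0 : ℝ) 1,
      ψ x ≤ (3 - 2 * Real.sqrt 2 * Real.sqrt (1 - α ^ 2)) / α) := by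
  have hα0 : 0 < α := by linarith
  obtain rfl : ψ = psi α := funext hψ
  obtain rfl : x₁ = psiArgmax α := hx₁
  have hbound : ∀ x ∈ Icc (0 : ℝ) 1, psi α x ≤ (3 - 2 * √2 * √(1 - α ^ 2)) / α :=
    fun x hx => psi_le hα0 hα1.le (by nlinarith [hx.1, hx.2])
  refine ⟨psiArgmax_mem_Icc hα hα1.le, fun x hx => ?_, hbound⟩
  rw [psi_psiArgmax hα0 hα1]
  exact hbound x hx
end

section
/- Let p be a positive integer and let r_p be the maximal root in (0,1) of 8 r^{2p} + r^{2(p−1)} − 6 r^{p−1} + 1 = 0. Let f(z) = ∑_{k≥0} a_{pk+1} z^{pk+1} be a p-symmetric analytic function in 𝔻 with |f(z)| ≤ 1 in 𝔻, and write a = |a_1|. If a < r_p^p, then ∑_{k≥0} |a_{pk+1}| r_p^{pk+1} ≤ r_p ( a + r_p^p √(1 − a²)/√(1 − r_p^{2p}) ) ≤ 2 r_p^{p+1} ≤ 1. -/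
/-!
On the circle of radius `s < 1` the series converges absolutely, so by Parseval the squared
moduli of its coefficients `|a_{pk+1}|² s^{2(pk+1)}` sum to the mean of `|f|²` there, which is
at most `1`; letting `s → 1` gives `∑ |a_{pk+1}|² ≤ 1`. Cauchy–Schwarz on the terms with
`k ≥ 1` then gives the first bound. The second reduces, after squaring, to
`0 ≤ (b - a)(3b - a - 4b³)` with `b = r_p^p`, and the root equation forces `b² ≤ 1/2`; the same
equation gives `2 r_p^{p+1} ≤ 1`.
-/

open MeasureTheory AddCircle Function Metric Topology

section FourierSeries

variable {T : ℝ} [Fact (0 < T)]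

theorem summable_smul_fourier {c : ℤ → ℂ} (hc : Summable (‖c ·‖)) :
    Summable fun n => c n • fourier (T := T) n :=
  .of_norm <| by simpa only [norm_smul, fourier_norm, mul_one] using hc

theorem fourierCoeff_tsum_smul_fourier {c : ℤ → ℂ} (hc : Summable (‖c ·‖)) (m : ℤ) :
    fourierCoeff (fun t : AddCircle T => ∑' n, c n • fourier n t) m = c m := by
  set F : ℤ → AddCircle T → ℂ := fun n t => fourier (-m) t • (c n • fourier n t)
  have hint (n : ℤ) : Integrable (F n) haarAddCircle := by
    have : Continuous (F n) := by fun_prop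
    exact this.integrable_of_hasCompactSupport (.of_compactSpace _)
  have hnorm (n : ℤ) : ∫ t, ‖F n t‖ ∂haarAddCircle = ‖c n‖ := by
    simp [F, fourier_apply, Circle.norm_coe]
  calc fourierCoeff (fun t : AddCircle T => ∑' n, c n • fourier n t) m
      = ∑' n, ∫ t, F n t ∂haarAddCircle := by
        rw [integral_tsum_of_summable_integral_norm hint (by simpa only [hnorm] using hc)]
        refine integral_congr_ae (.of_forall fun t => ?_)
        have ht : Summable fun n => c n • fourier n t :=
          .of_norm (by simpa [norm_smul, fourier_apply, Circle.norm_coe] using hc)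
        exact (ht.tsum_const_smul _).symm
    _ = ∑' n, fourierCoeff (T := T) (c n • fourier n) m := rfl
    _ = c m := by
        simp [fourierCoeff.const_smul, fourierCoeff_fourier, Pi.single_apply]

theorem hasSum_sq_norm_of_summable_norm {c : ℤ → ℂ} (hc : Summable (‖c ·‖)) :
    HasSum (fun n => ‖c n‖ ^ 2)
      (∫ t : AddCircle T, ‖∑' n, c n • fourier n t‖ ^ 2 ∂haarAddCircle) := by
  set F : C(AddCircle T, ℂ) := ∑' n, c n • fourier n
  have hF : ⇑F = fun t => ∑' n, c n • fourier n t :=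
    funext fun t => (ContinuousMap.tsum_apply (summable_smul_fourier hc) t).symm
  have hparseval := hasSum_sq_fourierCoeff (ContinuousMap.toLp (E := ℂ) 2 haarAddCircle ℂ F)
  simp only [fourierCoeff_toLp, hF, fourierCoeff_tsum_smul_fourier hc] at hparseval
  convert hparseval using 1
  refine integral_congr_ae ((ContinuousMap.coeFn_toLp (p := 2) (𝕜 := ℂ) _ F).mono fun t ht => ?_)
  simp only [ht, hF]

end FourierSeries

theorem summable_norm_mul_pow_of_summable_mul_pow {𝕜 ι : Type*} [NormedField 𝕜] {c : ι → 𝕜}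
    {e : ι → ℕ} (he : Injective e) {w : 𝕜} (h : Summable fun i => c i * w ^ e i) {s : ℝ}
    (hs0 : 0 ≤ s) (hs : s < ‖w‖) :
    Summable fun i => ‖c i‖ * s ^ e i := by
  have hw : 0 < ‖w‖ := hs0.trans_lt hs
  obtain ⟨C, hC⟩ := h.tendsto_cofinite_zero.norm.bddAbove_range_of_cofinite
  have hgeom : Summable fun i => C * (s / ‖w‖) ^ e i :=
    ((summable_geometric_of_lt_one (by positivity) ((div_lt_one hw).2 hs)).comp_injective
      he).mul_left C
  refine .of_nonneg_of_le (fun i => by positivity) (fun i => ?_) hgeom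
  calc ‖c i‖ * s ^ e i = ‖c i * w ^ e i‖ * (s / ‖w‖) ^ e i := by
        rw [norm_mul, norm_pow, div_pow]; field_simp
    _ ≤ C * (s / ‖w‖) ^ e i := by gcongr; exact hC ⟨i, rfl⟩

section LacunarySeries

variable {ι : Type*} {c : ι → ℂ} {e : ι → ℕ} {f : ℂ → ℂ} {M : ℝ}

theorem summable_and_tsum_sq_norm_mul_pow_le (he : Injective e)
    (hf : ∀ z ∈ ball (0 : ℂ) 1, HasSum (fun i => c i * z ^ e i) (f z))
    (hb : ∀ z ∈ ball (0 : ℂ) 1, ‖f z‖ ≤ M) {s : ℝ} (hs0 : 0 ≤ s) (hs1 : s < 1) :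
    Summable (fun i => (‖c i‖ * s ^ e i) ^ 2) ∧ ∑' i, (‖c i‖ * s ^ e i) ^ 2 ≤ M ^ 2 := by
  have hcircle (t : AddCircle (1 : ℝ)) : s * (t.toCircle : ℂ) ∈ ball (0 : ℂ) 1 := by
    simpa [Circle.norm_coe, abs_of_nonneg hs0] using hs1
  have hsum : Summable fun i => ‖c i‖ * s ^ e i := by
    have hw : ‖(((1 + s) / 2 : ℝ) : ℂ)‖ = (1 + s) / 2 := by
      rw [Complex.norm_real, Real.norm_of_nonneg (by positivity)]
    refine summable_norm_mul_pow_of_summable_mul_pow he (hf _ ?_).summable hs0 (by linarith)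
    rw [mem_ball_zero_iff, hw]; linarith
  have hinj : Injective fun i => (e i : ℤ) := Nat.cast_injective.comp he
  set d : ℤ → ℂ := extend (fun i => (e i : ℤ)) (fun i => c i * s ^ e i) 0
  have hd (i : ι) : d (e i) = c i * s ^ e i := hinj.extend_apply _ _ i
  have hd0 : ∀ n ∉ Set.range fun i => (e i : ℤ), d n = 0 := fun n hn =>
    (extend_apply' _ _ n hn).trans (Pi.zero_apply n)
  have hdsum : Summable (‖d ·‖) := by
    refine (hinj.summable_iff (f := (‖d ·‖)) fun n hn => by simp [hd0 n hn]).1 ?_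
    simpa [Function.comp_def, hd, abs_of_nonneg hs0] using hsum
  have hdf (t : AddCircle (1 : ℝ)) : ∑' n, d n • fourier n t = f (s * t.toCircle) := by
    rw [← hinj.tsum_eq (f := fun n => d n • fourier n t) ?_]
    · rw [← (hf _ (hcircle t)).tsum_eq]
      refine tsum_congr fun i => ?_
      simp [hd, fourier_apply, toCircle_nsmul, mul_pow, mul_assoc]
    · intro n hn
      by_contra hrange
      exact hn (by simp [hd0 n hrange])
  have hparseval := hasSum_sq_norm_of_summable_norm (T := 1) hdsum
  simp only [hdf] at hparseval
  have hI : ∫ t : AddCircle (1 : ℝ), ‖f (s * t.toCircle)‖ ^ 2 ∂haarAddCircle ≤ M ^ 2 := by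
    refine (Real.le_norm_self _).trans <| (norm_integral_le_of_norm_le_const (C := M ^ 2)
      (.of_forall fun t => ?_)).trans_eq (by simp)
    rw [Real.norm_of_nonneg (by positivity)]
    exact pow_le_pow_left₀ (norm_nonneg _) (hb _ (hcircle t)) 2
  have hc := (hinj.hasSum_iff (f := fun n => ‖d n‖ ^ 2) fun n hn => by simp [hd0 n hn]).2 hparseval
  simp only [comp_def, hd, norm_mul, norm_pow, Complex.norm_real, Real.norm_of_nonneg hs0] at hc
  exact ⟨hc.summable, hc.tsum_eq ▸ hI⟩

theorem summable_and_tsum_sq_norm_le (he : Injective e)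
    (hf : ∀ z ∈ ball (0 : ℂ) 1, HasSum (fun i => c i * z ^ e i) (f z))
    (hb : ∀ z ∈ ball (0 : ℂ) 1, ‖f z‖ ≤ M) :
    Summable (fun i => ‖c i‖ ^ 2) ∧ ∑' i, ‖c i‖ ^ 2 ≤ M ^ 2 := by
  have hfin (S : Finset ι) : ∑ i ∈ S, ‖c i‖ ^ 2 ≤ M ^ 2 := by
    have hcont : Continuous fun s : ℝ => ∑ i ∈ S, (‖c i‖ * s ^ e i) ^ 2 := by fun_prop
    have hlim : Filter.Tendsto (fun s : ℝ => ∑ i ∈ S, (‖c i‖ * s ^ e i) ^ 2) (𝓝[<] 1)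
        (𝓝 (∑ i ∈ S, ‖c i‖ ^ 2)) := by
      simpa using (hcont.tendsto 1).mono_left nhdsWithin_le_nhds
    refine le_of_tendsto hlim ?_
    filter_upwards [Ioo_mem_nhdsLT one_pos] with s hs
    obtain ⟨hsum, hle⟩ := summable_and_tsum_sq_norm_mul_pow_le he hf hb hs.1.le hs.2
    exact (hsum.sum_le_tsum S fun i _ => sq_nonneg _).trans hle
  exact ⟨summable_of_sum_le (fun i => sq_nonneg _) hfin,
    Real.tsum_le_of_sum_le (fun i => sq_nonneg _) hfin⟩

end LacunarySeries

theorem tsum_mul_le_sqrt_mul_sqrt {f g : ℕ → ℝ} (hf : ∀ n, 0 ≤ f n) (hg : ∀ n, 0 ≤ g n)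
    (hf2 : Summable (f · ^ 2)) (hg2 : Summable (g · ^ 2)) :
    ∑' n, f n * g n ≤ √(∑' n, f n ^ 2) * √(∑' n, g n ^ 2) :=
  Real.tsum_le_of_sum_range_le (fun n => mul_nonneg (hf n) (hg n)) fun N =>
    (Real.sum_mul_le_sqrt_mul_sqrt _ f g).trans <| by
      gcongr
      · exact hf2.sum_le_tsum _ fun n _ => sq_nonneg _
      · exact hg2.sum_le_tsum _ fun n _ => sq_nonneg _

theorem tsum_mul_pow_le_of_tsum_sq_le_one {x : ℕ → ℝ} (hx : ∀ k, 0 ≤ x k) (hx2 : Summable (x · ^ 2))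
    (hx1 : ∑' k, x k ^ 2 ≤ 1) {b : ℝ} (hb0 : 0 ≤ b) (hb1 : b < 1) :
    ∑' k, x k * b ^ k ≤ x 0 + b * √(1 - x 0 ^ 2) / √(1 - b ^ 2) := by
  have hbsq : b ^ 2 < 1 := pow_lt_one₀ hb0 hb1 two_ne_zero
  have hb2 : Summable fun k => (b ^ k) ^ 2 :=
    (summable_geometric_of_lt_one (sq_nonneg b) hbsq).congr fun k => by ring
  have hsum : Summable fun k => x k * b ^ k :=
    .of_nonneg_of_le (fun k => mul_nonneg (hx k) (by positivity))
      (fun k => by linarith [two_mul_le_add_sq (x k) (b ^ k)]) ((hx2.add hb2).div_const 2)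
  have htail_x : ∑' k, x (k + 1) ^ 2 ≤ 1 - x 0 ^ 2 := by
    rw [hx2.tsum_eq_zero_add] at hx1; linarith
  have htail_b : ∑' k, (b ^ (k + 1)) ^ 2 = b ^ 2 / (1 - b ^ 2) := by
    rw [div_eq_mul_inv, ← tsum_geometric_of_lt_one (sq_nonneg b) hbsq, ← tsum_mul_left]
    exact tsum_congr fun k => by ring
  rw [hsum.tsum_eq_zero_add, pow_zero, mul_one]
  gcongr
  calc ∑' k, x (k + 1) * b ^ (k + 1)
      ≤ √(∑' k, x (k + 1) ^ 2) * √(∑' k, (b ^ (k + 1)) ^ 2) :=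
        tsum_mul_le_sqrt_mul_sqrt (fun k => hx _) (fun k => by positivity)
          (hx2.comp_injective (add_left_injective 1)) (hb2.comp_injective (add_left_injective 1))
    _ ≤ √(1 - x 0 ^ 2) * √(b ^ 2 / (1 - b ^ 2)) := by
        rw [htail_b]
        exact mul_le_mul_of_nonneg_right (Real.sqrt_le_sqrt htail_x) (Real.sqrt_nonneg _)
    _ = b * √(1 - x 0 ^ 2) / √(1 - b ^ 2) := by
        rw [Real.sqrt_div' _ (by linarith), Real.sqrt_sq hb0]; ring

theorem add_mul_sqrt_div_sqrt_le_two_mul {A b : ℝ} (hA : 0 ≤ A) (hAb : A ≤ b)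
    (hb : b ^ 2 ≤ 1 / 2) : A + b * √(1 - A ^ 2) / √(1 - b ^ 2) ≤ 2 * b := by
  have hA2 : A ^ 2 ≤ b ^ 2 := pow_le_pow_left₀ hA hAb 2
  have hv : 0 < √(1 - b ^ 2) := Real.sqrt_pos.2 (by linarith)
  have hb0 : 0 ≤ b := hA.trans hAb
  have key : b * √(1 - A ^ 2) ≤ (2 * b - A) * √(1 - b ^ 2) := by
    rw [← pow_le_pow_iff_left₀ (mul_nonneg hb0 (Real.sqrt_nonneg _))
        (mul_nonneg (by linarith) hv.le) two_ne_zero,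
      mul_pow, mul_pow, Real.sq_sqrt (by linarith), Real.sq_sqrt (by linarith)]
    nlinarith [mul_nonneg (sub_nonneg.2 hAb) (mul_nonneg hb0 (by linarith : 0 ≤ 1 - 2 * b ^ 2))]
  rw [← le_sub_iff_add_le', div_le_iff₀ hv]
  exact key

theorem sq_pow_le_half_of_root {p : ℕ} {r : ℝ} (hr : r ∈ Set.Ioo 0 1)
    (hroot : 8 * r ^ (2 * p) + r ^ (2 * (p - 1)) - 6 * r ^ (p - 1) + 1 = 0) :
    (r ^ p) ^ 2 ≤ 1 / 2 := by
  have ht : r ^ (p - 1) ≤ 1 := pow_le_one₀ hr.1.le hr.2.le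
  rw [pow_mul', pow_mul'] at hroot
  nlinarith [mul_nonneg (sub_nonneg.2 ht) (by linarith : 0 ≤ 5 - r ^ (p - 1))]

theorem two_mul_pow_succ_le_one_of_root {p : ℕ} (hp : 0 < p) {r : ℝ} (hr : r ∈ Set.Ioo 0 1)
    (hroot : 8 * r ^ (2 * p) + r ^ (2 * (p - 1)) - 6 * r ^ (p - 1) + 1 = 0) :
    2 * r ^ (p + 1) ≤ 1 := by
  have ht : 0 < r ^ (p - 1) := pow_pos hr.1 _
  have hsplit : r ^ (2 * p) = r ^ (p - 1) * r ^ (p + 1) := by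
    rw [← pow_add]; congr 1; omega
  rw [hsplit, pow_mul'] at hroot
  nlinarith [sq_nonneg (r ^ (p - 1) - 1)]

theorem majorant_bound_case_two_general (p : ℕ) (hp : 0 < p)
    (rp : ℝ) (hrp : rp ∈ Set.Ioo (0 : ℝ) 1)
    (hroot : 8 * rp ^ (2 * p) + rp ^ (2 * (p - 1)) - 6 * rp ^ (p - 1) + 1 = 0)
    (f : ℂ → ℂ) (a : ℕ → ℂ)
    (hf : ∀ z ∈ Metric.ball (0 : ℂ) 1, HasSum (fun k : ℕ => a k * z ^ (p * k + 1)) (f z))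
    (hb : ∀ z ∈ Metric.ball (0 : ℂ) 1, ‖f z‖ ≤ 1)
    (hlt : ‖a 0‖ < rp ^ p) :
    ∑' k : ℕ, ‖a k‖ * rp ^ (p * k + 1) ≤
        rp * (‖a 0‖ + rp ^ p * Real.sqrt (1 - ‖a 0‖ ^ 2) / Real.sqrt (1 - rp ^ (2 * p))) ∧
    rp * (‖a 0‖ + rp ^ p * Real.sqrt (1 - ‖a 0‖ ^ 2) / Real.sqrt (1 - rp ^ (2 * p))) ≤
        2 * rp ^ (p + 1) ∧
    2 * rp ^ (p + 1) ≤ 1 := by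
  have hinj : Injective fun k => p * k + 1 := fun k l h =>
    Nat.eq_of_mul_eq_mul_left hp (Nat.succ_injective h)
  obtain ⟨hsum, hle⟩ := summable_and_tsum_sq_norm_le hinj hf hb
  have hhalf := sq_pow_le_half_of_root hrp hroot
  have hpow : rp ^ (2 * p) = (rp ^ p) ^ 2 := pow_mul' rp 2 p
  have hseries : ∑' k, ‖a k‖ * rp ^ (p * k + 1) = rp * ∑' k, ‖a k‖ * (rp ^ p) ^ k := by
    rw [← tsum_mul_left]
    exact tsum_congr fun k => by ring
  refine ⟨?_, ?_, two_mul_pow_succ_le_one_of_root hp hrp hroot⟩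
  · rw [hseries, hpow]
    exact mul_le_mul_of_nonneg_left (tsum_mul_pow_le_of_tsum_sq_le_one (fun k => norm_nonneg _) hsum
      (hle.trans_eq (one_pow 2)) (pow_nonneg hrp.1.le p) (pow_lt_one₀ hrp.1.le hrp.2 hp.ne'))
      hrp.1.le
  · rw [hpow, show 2 * rp ^ (p + 1) = rp * (2 * rp ^ p) by ring]
    exact mul_le_mul_of_nonneg_left
      (add_mul_sqrt_div_sqrt_le_two_mul (norm_nonneg _) hlt.le hhalf) hrp.1.le

/-- Case `a < r_p^p` of the proof of the Bohr inequality for `p`-symmetric functions: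
if `f(z) = ∑_{k≥0} a_{pk+1} z^{pk+1}` with `|f| ≤ 1` on 𝔻, `a = |a_1| < r_p^p`, where
`r_p` is the maximal root in `(0,1)` of `8 r^{2p} + r^{2(p-1)} - 6 r^{p-1} + 1 = 0`, then
`∑_{k≥0} |a_{pk+1}| r_p^{pk+1} ≤ r_p (a + r_p^p √(1-a²)/√(1-r_p^{2p})) ≤ 2 r_p^{p+1} ≤ 1`. -/
theorem majorant_bound_case_two (p : ℕ) (hp : 0 < p)
    (rp : ℝ) (hrp : rp ∈ Set.Ioo (0 : ℝ) 1)
    (hroot : 8 * rp ^ (2 * p) + rp ^ (2 * (p - 1)) - 6 * rp ^ (p - 1) + 1 = 0)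
    (hmax : ∀ s ∈ Set.Ioo (0 : ℝ) 1,
      8 * s ^ (2 * p) + s ^ (2 * (p - 1)) - 6 * s ^ (p - 1) + 1 = 0 → s ≤ rp)
    (f : ℂ → ℂ) (a : ℕ → ℂ)
    (hf : ∀ z ∈ Metric.ball (0 : ℂ) 1, HasSum (fun k : ℕ => a k * z ^ (p * k + 1)) (f z))
    (hb : ∀ z ∈ Metric.ball (0 : ℂ) 1, ‖f z‖ ≤ 1)
    (hlt : ‖a 0‖ < rp ^ p) :
    ∑' k : ℕ, ‖a k‖ * rp ^ (p * k + 1) ≤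
        rp * (‖a 0‖ + rp ^ p * Real.sqrt (1 - ‖a 0‖ ^ 2) / Real.sqrt (1 - rp ^ (2 * p))) ∧
    rp * (‖a 0‖ + rp ^ p * Real.sqrt (1 - ‖a 0‖ ^ 2) / Real.sqrt (1 - rp ^ (2 * p))) ≤
        2 * rp ^ (p + 1) ∧
    2 * rp ^ (p + 1) ≤ 1 :=
  majorant_bound_case_two_general p hp rp hrp hroot f a hf hb hlt
end

section
/- If f(z) = ∑_{n≥1} a_n z^n is analytic in the unit disk 𝔻 with f(0) = 0 and |f(z)| ≤ 1 for all z ∈ 𝔻, then ∑_{n≥1} |a_n| r^n ≤ 1 for all 0 ≤ r ≤ 1/√2. -/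
/-!
Bessel's inequality for the Fourier coefficients of `θ ↦ f (ρ e^{iθ})` gives
`∑ |a_n|² ρ^{2n} ≤ 1` for `ρ < 1`, hence `∑ |a_n|² ≤ 1` in the limit `ρ → 1`. Since `a_0 = 0`,
the termwise AM-GM inequality gives
`∑_{n≥1} |a_n| r^n ≤ (∑ |a_n|² + ∑_{n≥1} r^{2n}) / 2 ≤ (1 + r² / (1 - r²)) / 2`,
which is at most `1` exactly when `r² ≤ 1/2`.
-/

open MeasureTheory AddCircle

theorem Orthonormal.sum_sq_norm_le_of_hasSum {𝕜 E ι : Type*} [RCLike 𝕜] [NormedAddCommGroup E]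
    [InnerProductSpace 𝕜 E] {v : ι → E} (hv : Orthonormal 𝕜 v) {c : ι → 𝕜} {x : E}
    (hx : HasSum (fun i => c i • v i) x) (s : Finset ι) : ∑ i ∈ s, ‖c i‖ ^ 2 ≤ ‖x‖ ^ 2 := by
  classical
  have hcoeff : ∀ i, inner 𝕜 (v i) x = c i := fun i => by
    have h := (innerSL 𝕜 (v i)).hasSum hx
    simp only [innerSL_apply_apply, inner_smul_right, orthonormal_iff_ite.mp hv, mul_ite, mul_one,
      mul_zero] at h
    simpa using h.unique (hasSum_single i fun j hj => if_neg hj.symm)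
  simpa only [hcoeff] using hv.sum_inner_products_le x

theorem ContinuousMap.norm_toLp_le {α E : Type*} [TopologicalSpace α] [CompactSpace α]
    [MeasurableSpace α] [BorelSpace α] [NormedAddCommGroup E] [SecondCountableTopologyEither α E]
    {p : ENNReal} [Fact (1 ≤ p)] (μ : Measure α) [IsProbabilityMeasure μ] (𝕜 : Type*)
    [NontriviallyNormedField 𝕜] [NormedSpace 𝕜 E] (f : C(α, E)) :
    ‖toLp (E := E) p μ 𝕜 f‖ ≤ ‖f‖ := by
  refine ((toLp p μ 𝕜).le_opNorm f).trans (mul_le_of_le_one_left (norm_nonneg f) ?_)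
  simpa [measureUnivNNReal] using toLp_norm_le (E := E) (p := p) μ (𝕜 := 𝕜)

theorem summable_norm_mul_pow_of_summable {𝕜 : Type*} [NormedDivisionRing 𝕜] {a : ℕ → 𝕜} {z : 𝕜}
    (hz : Summable fun n => a n * z ^ n) {ρ : ℝ} (hρ0 : 0 ≤ ρ) (hρz : ρ < ‖z‖) :
    Summable fun n => ‖a n‖ * ρ ^ n := by
  obtain ⟨C, hC⟩ := hz.tendsto_atTop_zero.norm.isBoundedUnder_le.bddAbove_range
  have hz0 : 0 < ‖z‖ := hρ0.trans_lt hρz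
  have hq : ρ / ‖z‖ < 1 := (div_lt_one hz0).2 hρz
  refine ((summable_geometric_of_lt_one (by positivity) hq).mul_left C).of_nonneg_of_le
    (fun n => by positivity) fun n => ?_
  calc ‖a n‖ * ρ ^ n = ‖a n * z ^ n‖ * (ρ / ‖z‖) ^ n := by
        rw [norm_mul, norm_pow, div_pow]; field_simp
    _ ≤ C * (ρ / ‖z‖) ^ n := by gcongr; exact hC ⟨n, rfl⟩

theorem summable_mul_of_summable_sq {ι : Type*} {u v : ι → ℝ} (hu : Summable fun i => u i ^ 2)
    (hv : Summable fun i => v i ^ 2) : Summable fun i => u i * v i :=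
  ((hu.add hv).div_const 2).of_norm_bounded fun i => by
    rw [Real.norm_eq_abs, abs_mul]
    nlinarith [two_mul_le_add_sq |u i| |v i|, sq_abs (u i), sq_abs (v i)]

theorem tsum_mul_le_of_summable_sq {ι : Type*} {u v : ι → ℝ} (hu : Summable fun i => u i ^ 2)
    (hv : Summable fun i => v i ^ 2) :
    ∑' i, u i * v i ≤ (∑' i, u i ^ 2 + ∑' i, v i ^ 2) / 2 := by
  rw [← hu.tsum_add hv, ← tsum_div_const]
  exact (summable_mul_of_summable_sq hu hv).tsum_le_tsum
    (fun i => by nlinarith [two_mul_le_add_sq (u i) (v i)]) ((hu.add hv).div_const 2)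

theorem hasSum_sq_pow_succ {r : ℝ} (hr : r ^ 2 < 1) :
    HasSum (fun n : ℕ => (r ^ (n + 1)) ^ 2) (r ^ 2 / (1 - r ^ 2)) := by
  have h := (hasSum_geometric_of_lt_one (sq_nonneg r) hr).mul_left (r ^ 2)
  have hterm : (fun n : ℕ => (r ^ (n + 1)) ^ 2) = fun n => r ^ 2 * (r ^ 2) ^ n := by
    funext n; ring
  rwa [hterm, div_eq_mul_inv]

section PowerSeriesOnDisk

variable {f : ℂ → ℂ} {a : ℕ → ℂ} {M : ℝ}

theorem sum_sq_norm_mul_pow_le_of_norm_le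
    (hf : ∀ z ∈ Metric.ball (0 : ℂ) 1, HasSum (fun n => a n * z ^ n) (f z))
    (hb : ∀ z ∈ Metric.ball (0 : ℂ) 1, ‖f z‖ ≤ M) {ρ : ℝ} (hρ0 : 0 ≤ ρ) (hρ1 : ρ < 1)
    (s : Finset ℕ) : ∑ n ∈ s, (‖a n‖ * ρ ^ n) ^ 2 ≤ M ^ 2 := by
  have : Fact ((0 : ℝ) < 1) := ⟨one_pos⟩
  have hM : 0 ≤ M := (norm_nonneg _).trans (hb 0 (Metric.mem_ball_self one_pos))
  have hρz : ∀ x : AddCircle (1 : ℝ), (ρ : ℂ) * x.toCircle ∈ Metric.ball (0 : ℂ) 1 := fun x => by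
    simpa [Circle.norm_coe, abs_of_nonneg hρ0] using hρ1
  set c : ℕ → ℂ := fun n => a n * (ρ : ℂ) ^ n
  have hc : ∀ n, ‖c n‖ = ‖a n‖ * ρ ^ n := fun n => by simp [c, abs_of_nonneg hρ0]
  have hc_summable : Summable fun n => ‖c n‖ := by
    obtain ⟨σ, hρσ, hσ1⟩ := exists_between hρ1
    have hσ : ‖(σ : ℂ)‖ = σ := by simp [abs_of_nonneg (hρ0.trans hρσ.le)]
    simpa only [hc] using summable_norm_mul_pow_of_summable
      (hf σ (by rwa [mem_ball_zero_iff, hσ])).summable hρ0 (by rwa [hσ])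
  obtain ⟨F, hF⟩ : Summable fun n : ℕ => c n • fourier (T := 1) n :=
    hc_summable.of_norm_bounded fun n => by rw [norm_smul, fourier_norm, mul_one]
  have hF_apply : ∀ x, F x = f (ρ * x.toCircle) := fun x => by
    refine ((ContinuousMap.evalCLM ℂ x).hasSum hF).unique ?_
    convert hf _ (hρz x) using 1
    funext n
    simp only [ContinuousMap.evalCLM_apply, ContinuousMap.smul_apply, smul_eq_mul, fourier_apply,
      natCast_zsmul, toCircle_nsmul, Circle.coe_pow, c]
    ring
  have hF_norm : ‖F‖ ≤ M := (F.norm_le hM).2 fun x => hF_apply x ▸ hb _ (hρz x)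
  have hF_L2 : HasSum (fun n : ℕ => c n • fourierLp (T := 1) 2 n)
      (ContinuousMap.toLp 2 haarAddCircle ℂ F) := by
    simpa only [map_smul] using (ContinuousMap.toLp 2 haarAddCircle ℂ).hasSum hF
  calc ∑ n ∈ s, (‖a n‖ * ρ ^ n) ^ 2 = ∑ n ∈ s, ‖c n‖ ^ 2 := by simp only [hc]
    _ ≤ ‖ContinuousMap.toLp (E := ℂ) 2 haarAddCircle ℂ F‖ ^ 2 :=
      (orthonormal_fourier.comp _ Nat.cast_injective).sum_sq_norm_le_of_hasSum hF_L2 s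
    _ ≤ M ^ 2 := by gcongr; exact (F.norm_toLp_le _ ℂ).trans hF_norm

theorem sum_sq_norm_le_of_norm_le
    (hf : ∀ z ∈ Metric.ball (0 : ℂ) 1, HasSum (fun n => a n * z ^ n) (f z))
    (hb : ∀ z ∈ Metric.ball (0 : ℂ) 1, ‖f z‖ ≤ M) (s : Finset ℕ) :
    ∑ n ∈ s, ‖a n‖ ^ 2 ≤ M ^ 2 := by
  have hcont : Continuous fun ρ : ℝ => ∑ n ∈ s, (‖a n‖ * ρ ^ n) ^ 2 := by fun_prop
  have hlim := (hcont.tendsto 1).mono_left (nhdsWithin_le_nhds (s := Set.Iio 1))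
  simp only [one_pow, mul_one] at hlim
  refine le_of_tendsto hlim ?_
  filter_upwards [Ioo_mem_nhdsLT one_pos] with ρ hρ
  exact sum_sq_norm_mul_pow_le_of_norm_le hf hb hρ.1.le hρ.2 s

end PowerSeriesOnDisk

/-- Bohr inequality for bounded analytic functions vanishing at the origin:
if `f(z) = ∑_{n≥1} a_n z^n` with `|f| ≤ 1` on 𝔻, then `∑_{n≥1} |a_n| r^n ≤ 1`
for all `0 ≤ r ≤ 1/√2`. -/
theorem bohr_vanishing_at_origin (f : ℂ → ℂ) (a : ℕ → ℂ) (ha0 : a 0 = 0)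
    (hf : ∀ z ∈ Metric.ball (0 : ℂ) 1, HasSum (fun n : ℕ => a n * z ^ n) (f z))
    (hb : ∀ z ∈ Metric.ball (0 : ℂ) 1, ‖f z‖ ≤ 1) :
    ∀ r : ℝ, 0 ≤ r → r ≤ 1 / Real.sqrt 2 → ∑' n : ℕ, ‖a n‖ * r ^ n ≤ 1 := by
  intro r hr0 hr
  have hr2 : r ^ 2 ≤ 1 / 2 := by
    simpa [div_pow] using pow_le_pow_left₀ hr0 hr 2
  have hgeo := hasSum_sq_pow_succ (r := r) (by linarith)
  have hsq : ∀ s, ∑ n ∈ s, ‖a n‖ ^ 2 ≤ 1 := by simpa using sum_sq_norm_le_of_norm_le hf hb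
  have hsq_summable : Summable fun n => ‖a n‖ ^ 2 := summable_of_sum_le (fun n => by positivity) hsq
  have hsq_succ : ∑' n, ‖a (n + 1)‖ ^ 2 ≤ 1 := by
    simpa [hsq_summable.tsum_eq_zero_add, ha0] using hsq_summable.tsum_le_of_sum_le hsq
  have hu : Summable fun n => ‖a (n + 1)‖ ^ 2 := (summable_nat_add_iff 1).2 hsq_summable
  have hv : Summable fun n : ℕ => (r ^ (n + 1)) ^ 2 := hgeo.summable
  have huv : Summable fun n => ‖a (n + 1)‖ * r ^ (n + 1) := summable_mul_of_summable_sq hu hv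
  calc ∑' n, ‖a n‖ * r ^ n = ∑' n, ‖a (n + 1)‖ * r ^ (n + 1) := by
        rw [tsum_eq_zero_add' (f := fun n => ‖a n‖ * r ^ n) huv, ha0, norm_zero, zero_mul,
          zero_add]
    _ ≤ (∑' n, ‖a (n + 1)‖ ^ 2 + ∑' n, (r ^ (n + 1)) ^ 2) / 2 :=
        tsum_mul_le_of_summable_sq hu hv
    _ ≤ 1 := by
        have hgeo_le : r ^ 2 / (1 - r ^ 2) ≤ 1 := by rw [div_le_one (by linarith)]; linarith
        linarith [hgeo.tsum_eq]
end

section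
/- For f(z) = z/(1 − z²) = ∑_{k≥1} z^{2k−1} on the unit disk 𝔻, the majorant series satisfies ∑_{k≥1} r^{2k−1} = r/(1 − r²) for 0 ≤ r < 1, and r/(1 − r²) > 1 if and only if r > (√5 − 1)/2. Consequently, the Bohr radius for the class of functions subordinate to odd univalent functions cannot exceed (√5 − 1)/2 = 0.618034…. -/
lemma hs_aux (z : ℂ) (hz : ‖z‖ < 1) :
    HasSum (fun k : ℕ => z ^ (2 * k + 1)) (z / (1 - z ^ 2)) := by
  have h2 : ‖z ^ 2‖ < 1 := by
    rw [norm_pow]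
    exact pow_lt_one₀ (norm_nonneg z) hz (by norm_num)
  have := (hasSum_geometric_of_norm_lt_one h2).mul_left z
  have heq : (fun k : ℕ => z * (z ^ 2) ^ k) = fun k : ℕ => z ^ (2 * k + 1) := by
    funext k; rw [← pow_mul, pow_succ, mul_comm]
  rw [heq] at this
  simpa [div_eq_mul_inv, mul_comm] using this

/-- For `f(z) = z/(1-z²) = ∑_{k≥1} z^{2k-1}` on 𝔻, the majorant series satisfies
`∑_{k≥1} r^{2k-1} = r/(1-r²)` for `0 ≤ r < 1`, and `r/(1-r²) > 1` iff `r > (√5-1)/2`.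
Hence the Bohr radius of the class of functions subordinate to odd univalent functions
cannot exceed `(√5-1)/2`. -/
theorem majorant_of_z_div_one_sub_sq :
    (∀ z ∈ Metric.ball (0 : ℂ) 1,
      HasSum (fun k : ℕ => z ^ (2 * k + 1)) (z / (1 - z ^ 2))) ∧
    (∀ r : ℝ, 0 ≤ r → r < 1 → ∑' k : ℕ, r ^ (2 * k + 1) = r / (1 - r ^ 2)) ∧
    (∀ r : ℝ, 0 ≤ r → r < 1 →
      (1 < r / (1 - r ^ 2) ↔ (Real.sqrt 5 - 1) / 2 < r)) := by
  refine ⟨?_, ?_, ?_⟩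
  · intro z hz
    rw [Metric.mem_ball, dist_zero_right] at hz
    exact hs_aux z hz
  · intro r hr0 hr1
    have hr : ‖r‖ < 1 := by rwa [Real.norm_eq_abs, abs_of_nonneg hr0]
    have h2 : ‖r ^ 2‖ < 1 := by
      rw [norm_pow]
      exact pow_lt_one₀ (norm_nonneg r) hr (by norm_num)
    have := (hasSum_geometric_of_norm_lt_one h2).mul_left r
    have heq : (fun k : ℕ => r * (r ^ 2) ^ k) = fun k : ℕ => r ^ (2 * k + 1) := by
      funext k; rw [← pow_mul, pow_succ, mul_comm]
    rw [heq] at this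
    simpa [div_eq_mul_inv] using this.tsum_eq
  · intro r hr0 hr1
    have hd : 0 < 1 - r ^ 2 := by nlinarith
    rw [lt_div_iff₀ hd]
    have h5 : Real.sqrt 5 ^ 2 = 5 := Real.sq_sqrt (by norm_num)
    have h5pos : 0 < Real.sqrt 5 := Real.sqrt_pos.mpr (by norm_num)
    constructor
    · intro h
      nlinarith [sq_nonneg (2 * r + 1 - Real.sqrt 5), sq_nonneg (2 * r + 1 + Real.sqrt 5)]
    · intro h
      nlinarith [sq_nonneg (2 * r + 1 - Real.sqrt 5)]
end
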